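/- arXiv:cs/0410019 — 4 statements merged into one kernel-verified Lean document; each statement's English description precedes it below -/
import Mathlib

section
/- Let G be a bipartite Tanner graph drawn uniformly from the configuration-model ensemble with n variable nodes all of degree l ≥ 3 and m check nodes all of degree k. For any fixed integer E ≥ 1, the expected number of subsets of E variable nodes forming a stopping set (i.e., every check node adjacent to the subset has at least two edges into it) is O(n^{E - ⌈E·l/2⌉}) as n → ∞. -/
open Finset

/-- In the configuration model with `n` variable nodes of degree `l` and check nodes of degree
`k`, a matching of the `n·l` variable stubs to the `n·l` check stubs is a permutation `σ` of
`Fin (n·l)`: variable stub `s` belongs to variable node `s/l` and is matched to check stub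
`σ s`, belonging to check node `(σ s)/k`.  A set `S` of variable nodes is a stopping set if no
check node has exactly one edge into `S`. -/
def IsStoppingSet (n l k : ℕ) (σ : Equiv.Perm (Fin (n * l))) (S : Finset ℕ) : Prop :=
  ∀ c ∈ Finset.range (n * l),
    ((Finset.univ : Finset (Fin (n * l))).filter
        (fun s => s.val / l ∈ S ∧ (σ s).val / k = c)).card ≠ 1

instance (n l k : ℕ) (σ : Equiv.Perm (Fin (n * l))) (S : Finset ℕ) :
    Decidable (IsStoppingSet n l k σ S) := by
  unfold IsStoppingSet; infer_instance

/-- The number of stopping sets of size `E` in the configuration `σ`. -/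
def numStoppingSets (n l k E : ℕ) (σ : Equiv.Perm (Fin (n * l))) : ℕ :=
  (((Finset.range n).powersetCard E).filter (fun S => IsStoppingSet n l k σ S)).card

/-- The expected number of stopping sets of size `E`, the matching `σ` being uniform. -/
noncomputable def expNumStoppingSets (n l k E : ℕ) : ℝ :=
  (∑ σ : Equiv.Perm (Fin (n * l)), (numStoppingSets n l k E σ : ℝ)) / (Nat.factorial (n * l))

/-! If `S` is a stopping set of `E` variable nodes, every check node reached by one of the
`F = E·l` edges of `S` receives at least two of them, so these edges end in some set `T` of
`h = ⌊F/2⌋` check nodes, i.e. in at most `h·k` check stubs. For fixed `S` and `T` at most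
`(nl - F)! (hk)^F` matchings do this, and there are at most `(nl)^h` choices of `T` and `n^E`
of `S`. Since `(nl)! ≥ (nl - F)! (nl/2)^F`, the expectation is `O(n^{E + h - F})`, and
`F - h = ⌈F/2⌉`. -/

open Nat

section PermCounting

variable {α : Type*} [Fintype α] [DecidableEq α]

theorem card_perm_fixing (A : Finset α) :
    #{π : Equiv.Perm α | ∀ a ∈ A, π a = a} = (Fintype.card α - #A)! := by
  have e : Equiv.Perm {x // x ∉ A} ≃ {π : Equiv.Perm α // ∀ a ∈ A, π a = a} :=
    (Equiv.Perm.subtypeEquivSubtypePerm (· ∉ A)).trans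
      (Equiv.subtypeEquivRight fun π => by simp)
  rw [← Fintype.card_subtype, ← Fintype.card_congr e, Fintype.card_perm,
    Fintype.card_subtype_compl, Fintype.card_coe]

theorem card_perm_restrict_eq_le (A : Finset α) (g : A → α) :
    #{σ : Equiv.Perm α | ∀ a : A, σ a = g a} ≤ (Fintype.card α - #A)! := by
  rcases eq_empty_or_nonempty {σ : Equiv.Perm α | ∀ a : A, σ a = g a} with
    h | ⟨σ₀, hσ₀⟩
  · rw [h, card_empty]
    exact Nat.zero_le _
  rw [← card_perm_fixing A]
  refine card_le_card_of_injOn (σ₀⁻¹ * ·) (fun σ hσ => ?_) (mul_right_injective _).injOn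
  simp only [coe_filter, mem_filter, mem_univ, true_and, Set.mem_ofPred_eq] at hσ hσ₀ ⊢
  intro a ha
  simp [hσ ⟨a, ha⟩, ← hσ₀ ⟨a, ha⟩]

theorem card_perm_mapsTo_le (A B : Finset α) :
    #{σ : Equiv.Perm α | ∀ a ∈ A, σ a ∈ B} ≤ (Fintype.card α - #A)! * #B ^ #A := by
  calc #{σ : Equiv.Perm α | ∀ a ∈ A, σ a ∈ B}
      ≤ (Fintype.card α - #A)! * #(Fintype.piFinset fun _ : A => B) :=
        card_le_mul_card_image_of_maps_to
          (f := fun σ (a : A) => σ a) (fun σ hσ => by simpa using hσ) _ fun g _ =>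
          (card_le_card fun σ hσ => by simp_all [funext_iff]).trans
            (card_perm_restrict_eq_le A g)
    _ = (Fintype.card α - #A)! * #B ^ #A := by simp

end PermCounting

def varStubs (n l : ℕ) (S : Finset ℕ) : Finset (Fin (n * l)) := {s | s.val / l ∈ S}

theorem card_fin_filter_val_mem {n : ℕ} {S : Finset ℕ} (hS : S ⊆ range n) :
    #{i : Fin n | i.val ∈ S} = #S := by
  rw [← card_map Fin.valEmbedding]
  congr 1
  ext x
  simp only [mem_map, mem_filter, mem_univ, true_and, Fin.valEmbedding_apply]
  exact ⟨fun ⟨_, hi, hix⟩ => hix ▸ hi, fun hx => ⟨⟨x, mem_range.mp (hS hx)⟩, hx, rfl⟩⟩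

theorem card_varStubs {n l : ℕ} {S : Finset ℕ} (hS : S ⊆ range n) :
    #(varStubs n l S) = #S * l := by
  calc #(varStubs n l S)
        = #(({i : Fin n | i.val ∈ S} : Finset (Fin n)) ×ˢ (univ : Finset (Fin l))) :=
        card_equiv finProdFinEquiv.symm fun s => by simp [varStubs]
    _ = #S * l := by rw [card_product, card_fin_filter_val_mem hS, Finset.card_fin]

theorem card_filter_div_mem_le {N k : ℕ} (hk : 0 < k) (T : Finset ℕ) :
    #{b : Fin N | b.val / k ∈ T} ≤ #T * k := by
  rw [mul_comm]
  refine card_le_mul_card_image_of_maps_to (f := fun b : Fin N => b.val / k)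
    (fun b hb => (mem_filter.mp hb).2) k fun c _ => ?_
  calc #{b ∈ {b : Fin N | b.val / k ∈ T} | b.val / k = c} ≤ #(range k) :=
        card_le_card_of_injOn (fun b => b.val % k)
          (fun b _ => mem_range.mpr (Nat.mod_lt _ hk)) fun b hb b' hb' h => by
            simp only [coe_filter, mem_filter] at hb hb'
            rw [Fin.ext_iff, ← Nat.div_add_mod b.val k, ← Nat.div_add_mod b'.val k, hb.2, hb'.2]
            exact congrArg _ h
    _ = k := card_range k

theorem IsStoppingSet.two_mul_card_checks_le {n l k : ℕ} {σ : Equiv.Perm (Fin (n * l))}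
    {S : Finset ℕ} (hσ : IsStoppingSet n l k σ S) :
    2 * #((varStubs n l S).image fun s => (σ s).val / k) ≤ #(varStubs n l S) := by
  refine mul_card_image_le_card _ 2 fun c hc => ?_
  obtain ⟨s, hs, rfl⟩ := mem_image.mp hc
  have hc_lt : (σ s).val / k < n * l := (Nat.div_le_self _ _).trans_lt (σ s).isLt
  have hne := hσ _ (mem_range.mpr hc_lt)
  have hpos : 0 < #{t ∈ varStubs n l S | (σ t).val / k = (σ s).val / k} :=
    card_pos.mpr ⟨s, mem_filter.mpr ⟨hs, rfl⟩⟩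
  rw [varStubs, filter_filter] at hpos ⊢
  omega

theorem IsStoppingSet.exists_checkSet {n l k : ℕ} {σ : Equiv.Perm (Fin (n * l))}
    {S : Finset ℕ} (hσ : IsStoppingSet n l k σ S) (hS : S ⊆ range n) :
    ∃ T ∈ (range (n * l)).powersetCard (#S * l / 2),
      ∀ s ∈ varStubs n l S, (σ s).val / k ∈ T := by
  have hsub : (varStubs n l S).image (fun s => (σ s).val / k) ⊆ range (n * l) := by
    simp only [image_subset_iff, mem_range]
    exact fun s _ => (Nat.div_le_self _ _).trans_lt (σ s).isLt
  have hcard := hσ.two_mul_card_checks_le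
  rw [card_varStubs hS] at hcard
  have hSn : #S * l ≤ n * l := Nat.mul_le_mul_right l (by simpa using card_le_card hS)
  obtain ⟨T, hT₀T, hTsub, hTcard⟩ :=
    exists_subsuperset_card_eq (n := #S * l / 2) hsub (by omega) (by rw [card_range]; omega)
  exact ⟨T, mem_powersetCard.mpr ⟨hTsub, hTcard⟩, fun s hs => hT₀T (mem_image_of_mem _ hs)⟩

theorem card_isStoppingSet_le {n l k : ℕ} (hk : 0 < k) {S : Finset ℕ} (hS : S ⊆ range n) :
    #{σ : Equiv.Perm (Fin (n * l)) | IsStoppingSet n l k σ S}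
      ≤ (n * l) ^ (#S * l / 2) * ((n * l - #S * l)! * (#S * l / 2 * k) ^ (#S * l)) := by
  set h := #S * l / 2
  calc #{σ : Equiv.Perm (Fin (n * l)) | IsStoppingSet n l k σ S}
      ≤ #(((range (n * l)).powersetCard h).biUnion fun T =>
          {σ : Equiv.Perm (Fin (n * l)) |
            ∀ s ∈ varStubs n l S, σ s ∈ ({b | b.val / k ∈ T} : Finset (Fin (n * l)))}) := by
        refine card_le_card fun σ hσ => ?_
        obtain ⟨T, hT, hσT⟩ := (mem_filter.mp hσ).2.exists_checkSet hS
        exact mem_biUnion.mpr ⟨T, hT, mem_filter.mpr ⟨mem_univ _, fun s hs =>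
          mem_filter.mpr ⟨mem_univ _, hσT s hs⟩⟩⟩
    _ ≤ ∑ T ∈ (range (n * l)).powersetCard h,
          #{σ : Equiv.Perm (Fin (n * l)) |
            ∀ s ∈ varStubs n l S, σ s ∈ ({b | b.val / k ∈ T} : Finset (Fin (n * l)))} :=
        card_biUnion_le
    _ ≤ ∑ _T ∈ (range (n * l)).powersetCard h, (n * l - #S * l)! * (h * k) ^ (#S * l) := by
        refine sum_le_sum fun T hT => ?_
        have hmaps :=
          card_perm_mapsTo_le (varStubs n l S) ({b | b.val / k ∈ T} : Finset (Fin (n * l)))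
        rw [Fintype.card_fin, card_varStubs hS] at hmaps
        -- `congr!` reconciles the `Decidable` instances of the filter predicate, which for
        -- `Fin` is elaborated through `Nat.decidableForallFin`.
        refine (Eq.trans_le (by congr!) hmaps).trans ?_
        rw [← (mem_powersetCard.mp hT).2]
        gcongr
        exact card_filter_div_mem_le hk T
    _ ≤ (n * l) ^ h * ((n * l - #S * l)! * (h * k) ^ (#S * l)) := by
        rw [sum_const, card_powersetCard, card_range, smul_eq_mul]
        gcongr
        exact choose_le_pow _ _

theorem sum_numStoppingSets_le {n l k E : ℕ} (hk : 0 < k) :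
    ∑ σ : Equiv.Perm (Fin (n * l)), numStoppingSets n l k E σ
      ≤ n ^ E * ((n * l) ^ (E * l / 2) * ((n * l - E * l)! * (E * l / 2 * k) ^ (E * l))) := by
  simp only [numStoppingSets, card_filter]
  rw [sum_comm]
  calc ∑ S ∈ (range n).powersetCard E, ∑ σ : Equiv.Perm (Fin (n * l)),
          (if IsStoppingSet n l k σ S then 1 else 0)
      ≤ ∑ _S ∈ (range n).powersetCard E,
          (n * l) ^ (E * l / 2) * ((n * l - E * l)! * (E * l / 2 * k) ^ (E * l)) := by
        refine sum_le_sum fun S hS => ?_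
        obtain ⟨hSn, rfl⟩ := mem_powersetCard.mp hS
        rw [← card_filter]
        exact card_isStoppingSet_le hk hSn
    _ ≤ _ := by
        rw [sum_const, card_powersetCard, card_range, smul_eq_mul]
        gcongr
        exact choose_le_pow _ _

theorem pow_le_two_pow_mul_descFactorial {N F : ℕ} (h : 2 * F ≤ N) :
    N ^ F ≤ 2 ^ F * N.descFactorial F :=
  calc N ^ F ≤ (2 * (N + 1 - F)) ^ F := Nat.pow_le_pow_left (by omega) F
    _ = 2 ^ F * (N + 1 - F) ^ F := mul_pow _ _ _
    _ ≤ 2 ^ F * N.descFactorial F := Nat.mul_le_mul_left _ (pow_sub_le_descFactorial N F)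

theorem sum_numStoppingSets_mul_pow_le {n l k E : ℕ} (hk : 0 < k) (hl : 0 < l)
    (hn : 2 * E ≤ n) :
    (∑ σ : Equiv.Perm (Fin (n * l)), numStoppingSets n l k E σ) * n ^ (E * l)
      ≤ (2 * (E * l / 2) * k) ^ (E * l) * n ^ (E + E * l / 2) * (n * l)! := by
  set F := E * l
  set h := F / 2
  have hFN : 2 * F ≤ n * l := by rw [← mul_assoc]; exact Nat.mul_le_mul_right l hn
  calc (∑ σ : Equiv.Perm (Fin (n * l)), numStoppingSets n l k E σ) * n ^ F
      ≤ n ^ E * ((n * l) ^ h * ((n * l - F)! * (h * k) ^ F)) * n ^ F := by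
        gcongr
        exact sum_numStoppingSets_le hk
    _ = (h * k) ^ F * n ^ (E + h) * (n * l - F)! * (l ^ h * n ^ F) := by ring
    _ ≤ (h * k) ^ F * n ^ (E + h) * (n * l - F)! * (2 ^ F * (n * l).descFactorial F) := by
        refine Nat.mul_le_mul_left _ ?_
        calc l ^ h * n ^ F ≤ l ^ F * n ^ F := by gcongr; exact Nat.div_le_self F 2
          _ = (n * l) ^ F := by ring
          _ ≤ _ := pow_le_two_pow_mul_descFactorial hFN
    _ = (2 * h * k) ^ F * n ^ (E + h) * (n * l)! := by
        rw [← factorial_mul_descFactorial (by omega : F ≤ n * l)]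
        ring

theorem natCeil_natCast_div_two_le {K : Type*} [Semifield K] [LinearOrder K]
    [IsStrictOrderedRing K] [FloorSemiring K] (F : ℕ) : ⌈(F : K) / 2⌉₊ ≤ F - F / 2 := by
  rw [Nat.ceil_le, div_le_iff₀ two_pos]
  exact_mod_cast (by omega : F ≤ (F - F / 2) * 2)

/-- for a uniform configuration-model bipartite graph with `n` variable nodes of
degree `l ≥ 3` and `m = n·l/k` check nodes of degree `k`, and any fixed `E ≥ 1`, the expected
number of stopping sets consisting of `E` variable nodes is `O(n^{E − ⌈E·l/2⌉})` as `n → ∞`. -/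
theorem expected_stopping_sets_bigO
    (l k E : ℕ) (hl : 3 ≤ l) (hk : 1 ≤ k) (hE : 1 ≤ E) :
    ∃ C : ℝ, 0 < C ∧ ∃ N : ℕ, ∀ n : ℕ, N ≤ n → k ∣ n * l →
      expNumStoppingSets n l k E ≤
        C * (n : ℝ) ^ ((E : ℝ) - (Nat.ceil ((E * l : ℝ) / 2) : ℝ)) := by
  have hh : 1 ≤ E * l / 2 := by have := Nat.mul_le_mul hE hl; omega
  refine ⟨((2 * (E * l / 2) * k : ℕ) : ℝ) ^ (E * l), by positivity, 2 * E,
    fun n hn _ => ?_⟩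
  have hn0 : (0 : ℝ) < n := by exact_mod_cast (by omega : 0 < n)
  have key := sum_numStoppingSets_mul_pow_le hk (by omega : 0 < l) hn
  have hceil : ⌈(E * l : ℝ) / 2⌉₊ + E * l / 2 ≤ E * l := by
    have := natCeil_natCast_div_two_le (K := ℝ) (E * l)
    push_cast at this
    omega
  calc expNumStoppingSets n l k E
      ≤ ((2 * (E * l / 2) * k : ℕ) : ℝ) ^ (E * l) *
          ((n : ℝ) ^ (E + E * l / 2) / n ^ (E * l)) := by
        rw [expNumStoppingSets, div_le_iff₀ (by positivity), mul_div_assoc', div_mul_eq_mul_div,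
          le_div_iff₀ (by positivity)]
        exact_mod_cast key
    _ ≤ _ := by
        gcongr
        rw [← Real.rpow_natCast, ← Real.rpow_natCast, ← Real.rpow_sub hn0]
        apply Real.rpow_le_rpow_of_exponent_le (by exact_mod_cast (by omega : 1 ≤ n))
        have := (Nat.cast_le (α := ℝ)).mpr hceil
        push_cast at this ⊢
        linarith
end

section
/- Let f : [0,T] → ℝ^d be the solution of the ODE system dz/dτ = F(z, τ) with F Lipschitz, and let (X_n(ℓ))_{ℓ≥0} be a Markov chain on ℤ^d with bounded increments whose one-step drift satisfies E[X_n(ℓ+1) − X_n(ℓ) | X_n(ℓ)] = F(X_n(ℓ)/n, ℓ/n) + O(1/n) uniformly. Then for every δ > 0, P( max_{0 ≤ ℓ ≤ Tn} |X_n(ℓ) − n·f(ℓ/n)| > δ n ) → 0 as n → ∞, provided |X_n(0) − n·f(0)| = o(n). -/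
open MeasureTheory ProbabilityTheory Filter Topology

section DEMAuxSection
open Set
namespace DEMAux

variable {Ω : Type*} {m : MeasurableSpace Ω} [m0 : MeasurableSpace Ω] (μ : Measure Ω)
  [IsProbabilityMeasure μ]

lemma integrable_of_bdd {g : Ω → ℝ} (hg : AEStronglyMeasurable g μ) {c : ℝ}
    (h : ∀ᵐ ω ∂μ, |g ω| ≤ c) : Integrable g μ :=
  (integrable_const c).mono' hg (by simpa [Real.norm_eq_abs] using h)

lemma abs_condexp_le_of_abs_le (hle : m ≤ m0) {D : Ω → ℝ} {c : ℝ}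
    (hDi : Integrable D μ) (h : ∀ᵐ ω ∂μ, |D ω| ≤ c) :
    ∀ᵐ ω ∂μ, |(μ[D|m]) ω| ≤ c := by
  have h1 : μ[D|m] ≤ᵐ[μ] μ[(fun _ => c : Ω → ℝ)|m] :=
    condExp_mono hDi (integrable_const c) (h.mono fun ω hω => (abs_le.1 hω).2)
  have h2 : μ[(fun _ => (-c) : Ω → ℝ)|m] ≤ᵐ[μ] μ[D|m] :=
    condExp_mono (integrable_const (-c)) hDi (h.mono fun ω hω => (abs_le.1 hω).1)
  rw [condExp_const hle] at h1
  rw [condExp_const hle] at h2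
  filter_upwards [h1, h2] with ω hω1 hω2
  exact abs_le.2 ⟨hω2, hω1⟩

lemma integral_mul_sub_condexp_eq_zero (hle : m ≤ m0) {φ D : Ω → ℝ}
    (hφ : StronglyMeasurable[m] φ) {cφ cD : ℝ} (hcφ : 0 ≤ cφ)
    (hφb : ∀ᵐ ω ∂μ, |φ ω| ≤ cφ) (hD : AEStronglyMeasurable D μ) (hDb : ∀ ω, |D ω| ≤ cD) :
    ∫ ω, φ ω * (D ω - (μ[D|m]) ω) ∂μ = 0 := by
  have hDi : Integrable D μ := integrable_of_bdd μ hD (ae_of_all μ hDb)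
  have hgi : Integrable (μ[D|m]) μ := integrable_condExp
  have hgb : ∀ᵐ ω ∂μ, |(μ[D|m]) ω| ≤ cD :=
    abs_condexp_le_of_abs_le μ hle hDi (ae_of_all μ hDb)
  have hηi : Integrable (fun ω => D ω - (μ[D|m]) ω) μ := hDi.sub hgi
  have hφm : AEStronglyMeasurable φ μ := (hφ.mono hle).aestronglyMeasurable
  have hprodi : Integrable (φ * fun ω => D ω - (μ[D|m]) ω) μ := by
    refine integrable_of_bdd μ (hφm.mul hηi.aestronglyMeasurable) (c := cφ * (cD + cD)) ?_
    filter_upwards [hφb, hgb] with ω h1 h2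
    have hd : |D ω - (μ[D|m]) ω| ≤ cD + cD := (abs_sub _ _).trans (add_le_add (hDb ω) h2)
    calc |(φ * fun ω => D ω - (μ[D|m]) ω) ω| = |φ ω| * |D ω - (μ[D|m]) ω| := by
          simp [abs_mul]
      _ ≤ cφ * (cD + cD) := mul_le_mul h1 hd (abs_nonneg _) hcφ
  have hcond : μ[(φ * fun ω => D ω - (μ[D|m]) ω)|m]
      =ᵐ[μ] φ * μ[(fun ω => D ω - (μ[D|m]) ω)|m] :=
    condExp_mul_of_stronglyMeasurable_left hφ hprodi hηi
  have hzero : μ[(fun ω => D ω - (μ[D|m]) ω)|m] =ᵐ[μ] 0 := by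
    have heq : (fun ω => D ω - (μ[D|m]) ω) = D - μ[D|m] := rfl
    rw [heq]
    have hsub := condExp_sub (μ := μ) (m := m) hDi hgi
    have h2 : μ[(μ[D|m])|m] = μ[D|m] :=
      condExp_of_stronglyMeasurable hle stronglyMeasurable_condExp hgi
    filter_upwards [hsub] with ω hω
    rw [Pi.zero_apply, hω, Pi.sub_apply, h2, sub_self]
  have h1 : ∫ ω, (μ[(φ * fun ω => D ω - (μ[D|m]) ω)|m]) ω ∂μ
      = ∫ ω, (φ * fun ω => D ω - (μ[D|m]) ω) ω ∂μ := integral_condExp hle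
  have h2 : ∫ ω, (μ[(φ * fun ω => D ω - (μ[D|m]) ω)|m]) ω ∂μ = 0 := by
    rw [integral_congr_ae hcond]
    rw [integral_congr_ae (g := fun _ => (0:ℝ)) ?_, integral_zero]
    filter_upwards [hzero] with ω hω
    simp [hω]
  rw [← h2, h1]
  rfl


lemma moments (m' : ℕ → MeasurableSpace Ω) (hle : ∀ k, m' k ≤ m0) (hmono : Monotone m')
    (D : ℕ → Ω → ℝ) (hDm : ∀ j, Measurable[m' (j+1)] (D j)) (b : ℝ) (hb : 0 ≤ b)
    (hDb : ∀ j ω, |D j ω| ≤ b) :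
    ∀ k : ℕ,
      (∫ ω, (∑ j ∈ Finset.range k, (D j ω - (μ[D j|m' j]) ω))^2 ∂μ ≤ (2*b)^2 * k) ∧
      (∫ ω, (∑ j ∈ Finset.range k, (D j ω - (μ[D j|m' j]) ω))^4 ∂μ
        ≤ (7*(2*b)^4 + 2*(2*b)^5 + 2*(2*b)^3) * k^2) := by
  set β : ℝ := 2*b with hβdef
  have hβ : 0 ≤ β := by positivity
  have hDmeas0 : ∀ j, Measurable[m0] (D j) := fun j => (hDm j).mono (hle (j+1)) le_rfl
  have hDi : ∀ j, Integrable (D j) μ :=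
    fun j => integrable_of_bdd μ (hDmeas0 j).aestronglyMeasurable (ae_of_all μ (hDb j))
  have hgb : ∀ j, ∀ᵐ ω ∂μ, |(μ[D j|m' j]) ω| ≤ b :=
    fun j => abs_condexp_le_of_abs_le μ (hle j) (hDi j) (ae_of_all μ (hDb j))
  have hηb : ∀ j, ∀ᵐ ω ∂μ, |D j ω - (μ[D j|m' j]) ω| ≤ β := by
    intro j
    filter_upwards [hgb j] with ω h
    calc |D j ω - (μ[D j|m' j]) ω| ≤ |D j ω| + |(μ[D j|m' j]) ω| := abs_sub _ _
      _ ≤ b + b := add_le_add (hDb j ω) h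
      _ = β := by rw [hβdef]; ring
  have hηmeas0 : ∀ j, Measurable[m0] (fun ω => D j ω - (μ[D j|m' j]) ω) :=
    fun j => (hDmeas0 j).sub ((stronglyMeasurable_condExp.mono (hle j)).measurable)
  have hMsm : ∀ k, StronglyMeasurable[m' k]
      (fun ω => ∑ j ∈ Finset.range k, (D j ω - (μ[D j|m' j]) ω)) := by
    intro k
    apply Finset.stronglyMeasurable_fun_sum
    intro j hj
    rw [Finset.mem_range] at hj
    exact (((hDm j).mono (hmono hj) le_rfl).stronglyMeasurable).sub
      (stronglyMeasurable_condExp.mono (hmono hj.le))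
  have hMmeas0 : ∀ k, Measurable[m0]
      (fun ω => ∑ j ∈ Finset.range k, (D j ω - (μ[D j|m' j]) ω)) :=
    fun k => ((hMsm k).mono (hle k)).measurable
  have hMb : ∀ k, ∀ᵐ ω ∂μ, |∑ j ∈ Finset.range k, (D j ω - (μ[D j|m' j]) ω)| ≤ β * k := by
    intro k
    have hall : ∀ᵐ ω ∂μ, ∀ j, |D j ω - (μ[D j|m' j]) ω| ≤ β := ae_all_iff.2 hηb
    filter_upwards [hall] with ω h
    calc |∑ j ∈ Finset.range k, (D j ω - (μ[D j|m' j]) ω)|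
        ≤ ∑ j ∈ Finset.range k, |D j ω - (μ[D j|m' j]) ω| := Finset.abs_sum_le_sum_abs _ _
      _ ≤ ∑ _j ∈ Finset.range k, β := Finset.sum_le_sum fun j _ => h j
      _ = β * k := by rw [Finset.sum_const, Finset.card_range]; ring
  intro k
  induction k with
  | zero => simp
  | succ k ih =>
    obtain ⟨ih2, ih4⟩ := ih
    set M : Ω → ℝ := fun ω => ∑ j ∈ Finset.range k, (D j ω - (μ[D j|m' j]) ω) with hM
    set η : Ω → ℝ := fun ω => D k ω - (μ[D k|m' k]) ω with hη
    have hsucc : (fun ω => ∑ j ∈ Finset.range (k+1), (D j ω - (μ[D j|m' j]) ω))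
        = fun ω => M ω + η ω := by
      funext ω; rw [Finset.sum_range_succ]
    -- integrability of monomials
    have hi : ∀ p q : ℕ, Integrable (fun ω => (M ω)^p * (η ω)^q) μ := by
      intro p q
      refine integrable_of_bdd μ ?_ (c := (β*k)^p * β^q) ?_
      · exact (((hMmeas0 k).pow_const p).mul ((hηmeas0 k).pow_const q)).aestronglyMeasurable
      · filter_upwards [hMb k, hηb k] with ω h1 h2
        rw [abs_mul, abs_pow, abs_pow]
        exact mul_le_mul (pow_le_pow_left₀ (abs_nonneg _) h1 p)
          (pow_le_pow_left₀ (abs_nonneg _) h2 q) (by positivity) (by positivity)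
    have i20 : Integrable (fun ω => (M ω)^2) μ := by simpa using hi 2 0
    have i11 : Integrable (fun ω => M ω * η ω) μ := by simpa using hi 1 1
    have i02 : Integrable (fun ω => (η ω)^2) μ := by simpa using hi 0 2
    have i40 : Integrable (fun ω => (M ω)^4) μ := by simpa using hi 4 0
    have i31 : Integrable (fun ω => (M ω)^3 * η ω) μ := by simpa using hi 3 1
    have i22 : Integrable (fun ω => (M ω)^2 * (η ω)^2) μ := by simpa using hi 2 2
    have i13 : Integrable (fun ω => M ω * (η ω)^3) μ := by simpa using hi 1 3
    have i04 : Integrable (fun ω => (η ω)^4) μ := by simpa using hi 0 4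
    have iabsM : Integrable (fun ω => |M ω|) μ := (by simpa using hi 1 0 : Integrable M μ).abs
    -- zero cross terms
    have hz1 : ∫ ω, M ω * η ω ∂μ = 0 :=
      integral_mul_sub_condexp_eq_zero μ (hle k) (hMsm k) (by positivity) (hMb k)
        (hDmeas0 k).aestronglyMeasurable (hDb k)
    have hz3 : ∫ ω, (M ω)^3 * η ω ∂μ = 0 := by
      have hM3sm : StronglyMeasurable[m' k] (fun ω => (M ω)^3) := (hMsm k).pow 3
      refine integral_mul_sub_condexp_eq_zero μ (hle k) hM3sm
        (cφ := (β*k)^3) (by positivity) ?_ (hDmeas0 k).aestronglyMeasurable (hDb k)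
      filter_upwards [hMb k] with ω h
      rw [abs_pow]
      exact pow_le_pow_left₀ (abs_nonneg _) h 3
    -- basic integral bounds
    have hint_const : ∀ c : ℝ, ∫ (_ : Ω), c ∂μ = c := by
      intro c; simp
    have hη2 : ∫ ω, (η ω)^2 ∂μ ≤ β^2 := by
      rw [← hint_const (β^2)]
      refine integral_mono_ae i02 (integrable_const _) ?_
      filter_upwards [hηb k] with ω h
      calc (η ω)^2 = |η ω|^2 := (sq_abs _).symm
        _ ≤ β^2 := pow_le_pow_left₀ (abs_nonneg _) h 2
    have hη4 : ∫ ω, (η ω)^4 ∂μ ≤ β^4 := by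
      rw [← hint_const (β^4)]
      refine integral_mono_ae i04 (integrable_const _) ?_
      filter_upwards [hηb k] with ω h
      calc (η ω)^4 = |η ω|^4 := by rw [← abs_pow, abs_of_nonneg (by positivity : (0:ℝ) ≤ (η ω)^4)]
        _ ≤ β^4 := pow_le_pow_left₀ (abs_nonneg _) h 4
    have ih2' : ∫ ω, (M ω)^2 ∂μ ≤ β^2 * k := ih2
    have ih4' : ∫ ω, (M ω)^4 ∂μ ≤ (7*β^4 + 2*β^5 + 2*β^3) * (k:ℝ)^2 := ih4
    have habsM : ∫ ω, |M ω| ∂μ ≤ (1 + β^2*k)/2 := by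
      have h1 : ∫ ω, 2*|M ω| ∂μ ≤ ∫ ω, (1 + (M ω)^2) ∂μ := by
        refine integral_mono_ae (iabsM.const_mul 2) ((integrable_const 1).add i20)
          (ae_of_all _ fun ω => ?_)
        show 2*|M ω| ≤ 1 + (M ω)^2
        nlinarith [sq_nonneg (|M ω| - 1), sq_abs (M ω)]
      rw [integral_const_mul] at h1
      rw [integral_add (integrable_const 1) i20, hint_const] at h1
      linarith
    have h22 : ∫ ω, (M ω)^2 * (η ω)^2 ∂μ ≤ β^2 * (β^2 * k) := by
      have h1 : ∫ ω, (M ω)^2 * (η ω)^2 ∂μ ≤ ∫ ω, β^2 * (M ω)^2 ∂μ := by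
        refine integral_mono_ae i22 (i20.const_mul _) ?_
        filter_upwards [hηb k] with ω h
        have : (η ω)^2 ≤ β^2 := by
          calc (η ω)^2 = |η ω|^2 := (sq_abs _).symm
            _ ≤ β^2 := pow_le_pow_left₀ (abs_nonneg _) h 2
        nlinarith [sq_nonneg (M ω)]
      rw [integral_const_mul] at h1
      exact h1.trans (mul_le_mul_of_nonneg_left ih2' (by positivity))
    have h13 : ∫ ω, M ω * (η ω)^3 ∂μ ≤ β^3 * ((1 + β^2*k)/2) := by
      have h1 : ∫ ω, M ω * (η ω)^3 ∂μ ≤ ∫ ω, β^3 * |M ω| ∂μ := by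
        refine integral_mono_ae i13 (iabsM.const_mul _) ?_
        filter_upwards [hηb k] with ω h
        have h3 : |η ω|^3 ≤ β^3 := pow_le_pow_left₀ (abs_nonneg _) h 3
        calc M ω * (η ω)^3 ≤ |M ω * (η ω)^3| := le_abs_self _
          _ = |M ω| * |η ω|^3 := by rw [abs_mul, abs_pow]
          _ ≤ |M ω| * β^3 := mul_le_mul_of_nonneg_left h3 (abs_nonneg _)
          _ = β^3 * |M ω| := by ring
      rw [integral_const_mul] at h1
      exact h1.trans (mul_le_mul_of_nonneg_left habsM (by positivity))
    constructor
    · have hrw : ∫ ω, (∑ j ∈ Finset.range (k+1), (D j ω - (μ[D j|m' j]) ω))^2 ∂μ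
          = ∫ ω, (M ω + η ω)^2 ∂μ := by
        apply integral_congr_ae
        filter_upwards with ω
        rw [Finset.sum_range_succ]
      have hexp : ∫ ω, (M ω + η ω)^2 ∂μ
          = ∫ ω, (M ω)^2 ∂μ + (2*∫ ω, M ω * η ω ∂μ + ∫ ω, (η ω)^2 ∂μ) := by
        have hpt : (fun ω => (M ω + η ω)^2)
            = fun ω => (M ω)^2 + (2*(M ω * η ω) + (η ω)^2) := by
          funext ω; ring
        have ia1 : Integrable (fun ω => 2*(M ω * η ω) + (η ω)^2) μ :=
          (i11.const_mul 2).add i02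
        rw [hpt, integral_add i20 ia1, integral_add (i11.const_mul 2) i02, integral_const_mul]
      rw [hrw, hexp, hz1]
      push_cast
      nlinarith [Nat.cast_nonneg (α := ℝ) k, hη2, ih2']
    · have hrw : ∫ ω, (∑ j ∈ Finset.range (k+1), (D j ω - (μ[D j|m' j]) ω))^4 ∂μ
          = ∫ ω, (M ω + η ω)^4 ∂μ := by
        apply integral_congr_ae
        filter_upwards with ω
        rw [Finset.sum_range_succ]
      have hexp : ∫ ω, (M ω + η ω)^4 ∂μ
          = ∫ ω, (M ω)^4 ∂μ + (4*∫ ω, (M ω)^3 * η ω ∂μ + (6*∫ ω, (M ω)^2*(η ω)^2 ∂μ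
            + (4*∫ ω, M ω * (η ω)^3 ∂μ + ∫ ω, (η ω)^4 ∂μ))) := by
        have hpt : (fun ω => (M ω + η ω)^4)
            = fun ω => (M ω)^4 + (4*((M ω)^3 * η ω) + (6*((M ω)^2*(η ω)^2)
              + (4*(M ω * (η ω)^3) + (η ω)^4))) := by
          funext ω; ring
        have ia4 : Integrable (fun ω => 4*(M ω * (η ω)^3) + (η ω)^4) μ :=
          (i13.const_mul 4).add i04
        have ia3 : Integrable (fun ω => 6*((M ω)^2*(η ω)^2) + (4*(M ω * (η ω)^3) + (η ω)^4)) μ :=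
          (i22.const_mul 6).add ia4
        have ia2 : Integrable (fun ω => 4*((M ω)^3 * η ω) + (6*((M ω)^2*(η ω)^2)
            + (4*(M ω * (η ω)^3) + (η ω)^4))) μ := (i31.const_mul 4).add ia3
        rw [hpt, integral_add i40 ia2, integral_add (i31.const_mul 4) ia3,
          integral_add (i22.const_mul 6) ia4, integral_add (i13.const_mul 4) i04,
          integral_const_mul, integral_const_mul, integral_const_mul]
      rw [hrw, hexp, hz3]
      push_cast
      have hk0 : (0:ℝ) ≤ (k:ℝ) := Nat.cast_nonneg k
      have q3 : (0:ℝ) ≤ β^3*(k:ℝ) := by positivity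
      have q4 : (0:ℝ) ≤ β^4*(k:ℝ) := by positivity
      have q5 : (0:ℝ) ≤ β^5*(k:ℝ) := by positivity
      have r4 : (0:ℝ) ≤ β^4 := by positivity
      have r5 : (0:ℝ) ≤ β^5 := by positivity
      linarith [ih4', h22, h13, hη4, q3, q4, q5, r4, r5]


lemma geom_sum_aux (x : ℝ) : ∀ ℓ : ℕ, ∑ j ∈ Finset.range ℓ, x*(1+x)^j = (1+x)^ℓ - 1 := by
  intro ℓ
  induction ℓ with
  | zero => simp
  | succ ℓ ih => rw [Finset.sum_range_succ, ih]; ring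


lemma cheb4 {g : Ω → ℝ} {c s : ℝ} (hs : 0 < s)
    (hint : Integrable (fun ω => (g ω)^4) μ) (hbnd : ∫ ω, (g ω)^4 ∂μ ≤ c) :
    (μ {ω | s < |g ω|}).toReal ≤ c / s^4 := by
  have hsub : {ω | s < |g ω|} ⊆ {ω | s^4 ≤ (g ω)^4} := by
    intro ω (h : s < |g ω|)
    have h4 : s^4 ≤ |g ω|^4 := pow_le_pow_left₀ hs.le h.le 4
    calc s^4 ≤ |g ω|^4 := h4
      _ = (g ω)^4 := by rw [← abs_pow, abs_of_nonneg (by positivity : (0:ℝ) ≤ (g ω)^4)]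
  have hmono : (μ {ω | s < |g ω|}).toReal ≤ (μ {ω | s^4 ≤ (g ω)^4}).toReal :=
    ENNReal.toReal_mono (measure_ne_top μ _) (measure_mono hsub)
  have hmarkov := mul_meas_ge_le_integral_of_nonneg
    (ae_of_all μ (fun ω => by positivity : ∀ ω, (0:ℝ) ≤ (g ω)^4)) hint (s^4)
  have hs4 : (0:ℝ) < s^4 := by positivity
  rw [le_div_iff₀ hs4]
  calc (μ {ω | s < |g ω|}).toReal * s^4
      ≤ (μ {ω | s^4 ≤ (g ω)^4}).toReal * s^4 := by gcongr
    _ = s^4 * (μ {ω | s^4 ≤ (g ω)^4}).toReal := by ring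
    _ ≤ ∫ ω, (g ω)^4 ∂μ := hmarkov
    _ ≤ c := hbnd


end DEMAux
section ODEPart
namespace DEMAux
variable {d : ℕ} {T : ℝ} {F : (Fin d → ℝ) → ℝ → (Fin d → ℝ)} {L : NNReal}
  {f : ℝ → (Fin d → ℝ)} {M₁ : ℝ}

lemma lip_f (hode : ∀ τ ∈ Set.Icc 0 T, HasDerivAt f (F (f τ) τ) τ)
    (hM₁ : ∀ τ ∈ Set.Icc 0 T, ‖F (f τ) τ‖ ≤ M₁)
    {a b : ℝ} (ha : 0 ≤ a) (hab : a ≤ b) (hb : b ≤ T) :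
    ‖f b - f a‖ ≤ M₁ * (b - a) := by
  have hsub : Icc a b ⊆ Icc 0 T := Icc_subset_Icc ha hb
  have hderiv : ∀ x ∈ Icc a b, HasDerivWithinAt f (F (f x) x) (Icc a b) x :=
    fun x hx => (hode x (hsub hx)).hasDerivWithinAt
  have hbound : ∀ x ∈ Ico a b, ‖F (f x) x‖ ≤ M₁ :=
    fun x hx => hM₁ x (hsub (Ico_subset_Icc_self hx))
  exact norm_image_sub_le_of_norm_deriv_le_segment' hderiv hbound b (right_mem_Icc.2 hab)

lemma step_f (hFlip : LipschitzWith L (Function.uncurry F))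
    (hode : ∀ τ ∈ Set.Icc 0 T, HasDerivAt f (F (f τ) τ) τ)
    (hM₁ : ∀ τ ∈ Set.Icc 0 T, ‖F (f τ) τ‖ ≤ M₁) (hM₁0 : 0 ≤ M₁)
    {a b : ℝ} (ha : 0 ≤ a) (hab : a ≤ b) (hb : b ≤ T) :
    ‖f b - f a - (b - a) • F (f a) a‖ ≤ ((L : ℝ) * ((M₁+1) * (b-a))) * (b - a) := by
  have hsub : Icc a b ⊆ Icc 0 T := Icc_subset_Icc ha hb
  set c : Fin d → ℝ := F (f a) a with hc
  set g : ℝ → (Fin d → ℝ) := fun t => f t - t • c with hg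
  have hderiv : ∀ x ∈ Icc a b, HasDerivWithinAt g (F (f x) x - c) (Icc a b) x := by
    intro x hx
    have h1 : HasDerivAt (fun t : ℝ => t • c) ((1:ℝ) • c) x :=
      (hasDerivAt_id x).smul_const c
    have h2 : HasDerivAt g (F (f x) x - c) x := by
      have := (hode x (hsub hx)).sub (h1.congr_deriv (one_smul ℝ c))
      exact this
    exact h2.hasDerivWithinAt
  have hbound : ∀ x ∈ Ico a b, ‖F (f x) x - c‖ ≤ (L : ℝ) * ((M₁+1) * (b-a)) := by
    intro x hx
    have hx' : x ∈ Icc a b := Ico_subset_Icc_self hx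
    have hdist := hFlip.dist_le_mul (f x, x) (f a, a)
    have heq : dist (Function.uncurry F (f x, x)) (Function.uncurry F (f a, a))
        = ‖F (f x) x - c‖ := by rw [dist_eq_norm]; rfl
    rw [heq, Prod.dist_eq] at hdist
    refine hdist.trans ?_
    have hd1 : dist (f x) (f a) ≤ (M₁+1) * (b - a) := by
      rw [dist_eq_norm]
      calc ‖f x - f a‖ ≤ M₁ * (x - a) := lip_f hode hM₁ ha hx'.1 (hx'.2.trans hb)
        _ ≤ (M₁+1) * (b-a) := by nlinarith [hx'.1, hx'.2]
    have hd2 : dist x a ≤ (M₁+1) * (b - a) := by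
      rw [Real.dist_eq, abs_of_nonneg (by linarith [hx'.1] : (0:ℝ) ≤ x - a)]
      nlinarith [hx'.1, hx'.2]
    exact mul_le_mul_of_nonneg_left (max_le hd1 hd2) L.coe_nonneg
  have hfinal := norm_image_sub_le_of_norm_deriv_le_segment' hderiv hbound b (right_mem_Icc.2 hab)
  have hgd : g b - g a = f b - f a - (b - a) • c := by
    rw [hg]; simp only [sub_smul]; abel
  rw [hgd] at hfinal
  exact hfinal


end DEMAux
end ODEPart
end DEMAuxSection

set_option maxHeartbeats 2000000 in
/-- Wormald/Kurtz differential equation method: let `f : [0,T] → ℝ^d` solve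
`dz/dτ = F(z,τ)` with `F` Lipschitz, and let `(X_n(ℓ))` be, for each `n`, a process on `ℤ^d`
with increments bounded by `B` whose one-step drift, conditionally on the history,
is `F(X_n(ℓ)/n, ℓ/n) + O(1/n)` uniformly.  If `|X_n(0) − n f(0)| = o(n)`, then for every
`δ > 0`, `P(max_{0≤ℓ≤Tn} |X_n(ℓ) − n f(ℓ/n)| > δn) → 0` as `n → ∞`. -/
theorem differential_equation_method
    (d : ℕ) (T : ℝ) (hT : 0 < T)
    (F : (Fin d → ℝ) → ℝ → (Fin d → ℝ)) (L : NNReal)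
    (hFlip : LipschitzWith L (Function.uncurry F))
    (f : ℝ → (Fin d → ℝ))
    (hode : ∀ τ ∈ Set.Icc 0 T, HasDerivAt f (F (f τ) τ) τ)
    (Ω : ℕ → Type*) [∀ n, MeasurableSpace (Ω n)]
    (μ : ∀ n, Measure (Ω n)) [∀ n, IsProbabilityMeasure (μ n)]
    (X : ∀ n, ℕ → Ω n → (Fin d → ℤ))
    (hmeas : ∀ n ℓ, Measurable (X n ℓ))
    (B : ℕ)
    (hbdd : ∀ n ℓ ω i, |X n (ℓ + 1) ω i - X n ℓ ω i| ≤ (B : ℤ))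
    -- one-step drift `F(X/n, ℓ/n) + O(1/n)`, conditionally on the natural filtration
    (C : ℝ)
    (hdrift : ∀ n : ℕ, 1 ≤ n → ∀ ℓ : ℕ, (ℓ : ℝ) ≤ T * n → ∀ i : Fin d,
      ∀ᵐ ω ∂(μ n),
        |((μ n)[fun ω' => ((X n (ℓ + 1) ω' i - X n ℓ ω' i : ℤ) : ℝ) |
            MeasurableSpace.comap (fun ω' (j : Fin (ℓ + 1)) => X n j ω') inferInstance]) ω
          - F (fun i' => (X n ℓ ω i' : ℝ) / n) ((ℓ : ℝ) / n) i| ≤ C / n)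
    -- initial condition `|X_n(0) − n f(0)| = o(n)`
    (e : ℕ → ℝ)
    (hinit : ∀ n ω, ‖(fun i => (X n 0 ω i : ℝ)) - (n : ℝ) • f 0‖ ≤ e n)
    (he : Tendsto (fun n => e n / n) atTop (nhds 0)) :
    ∀ δ : ℝ, 0 < δ →
      Tendsto (fun n : ℕ =>
          ((μ n) {ω | ∃ ℓ : ℕ, (ℓ : ℝ) ≤ T * n ∧
            δ * n < ‖(fun i => (X n ℓ ω i : ℝ)) - (n : ℝ) • f ((ℓ : ℝ) / n)‖}).toReal)
        atTop (nhds 0) := by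
  intro δ hδ
  rcases Nat.eq_zero_or_pos d with hd | hd
  · subst hd
    have hempty : ∀ n : ℕ, {ω | ∃ ℓ : ℕ, (ℓ : ℝ) ≤ T * n ∧
        δ * n < ‖(fun i => (X n ℓ ω i : ℝ)) - (n : ℝ) • f ((ℓ : ℝ) / n)‖} = (∅ : Set (Ω n)) := by
      intro n
      ext ω
      simp only [Set.mem_setOf_eq, Set.mem_empty_iff_false, iff_false, not_exists, not_and, not_lt]
      intro ℓ _
      have hv : (fun i => (X n ℓ ω i : ℝ)) - (n : ℝ) • f ((ℓ : ℝ) / n) = 0 :=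
        Subsingleton.elim _ _
      rw [hv, norm_zero]
      positivity
    simp only [hempty, measure_empty, ENNReal.toReal_zero]
    exact tendsto_const_nhds
  -- main case
  -- a bound for the drift field along the solution
  have hfc : ContinuousOn f (Set.Icc 0 T) := fun τ hτ =>
    (hode τ hτ).continuousAt.continuousWithinAt
  have hFc : ContinuousOn (fun τ => F (f τ) τ) (Set.Icc 0 T) := by
    have h1 : ContinuousOn (fun τ : ℝ => (f τ, τ)) (Set.Icc 0 T) :=
      hfc.prodMk (continuousOn_id)
    exact hFlip.continuous.comp_continuousOn h1
  obtain ⟨M₁', hM₁'⟩ := isCompact_Icc.exists_bound_of_continuousOn hFc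
  set M₁ : ℝ := max M₁' 0 with hM₁def
  have hM₁0 : 0 ≤ M₁ := le_max_right _ _
  have hM₁ : ∀ τ ∈ Set.Icc 0 T, ‖F (f τ) τ‖ ≤ M₁ :=
    fun τ hτ => (hM₁' τ hτ).trans (le_max_left _ _)
  set K : ℝ := (L : ℝ) * (M₁ + 1) with hKdef
  have hK0 : 0 ≤ K := by positivity
  set C' : ℝ := |C| with hC'def
  have hC'0 : 0 ≤ C' := abs_nonneg _
  set E : ℝ := Real.exp ((L : ℝ) * T) with hEdef
  have hE0 : 0 < E := Real.exp_pos _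
  set ε : ℝ := δ / (2 * E) with hεdef
  have hε0 : 0 < ε := by positivity
  set Bb : ℝ := (B : ℝ) with hBbdef
  have hBb0 : (0:ℝ) ≤ Bb := Nat.cast_nonneg _
  set cB : ℝ := 7*(2*Bb)^4 + 2*(2*Bb)^5 + 2*(2*Bb)^3 with hcBdef
  have hcB0 : 0 ≤ cB := by positivity
  set A1 : ℝ := d * cB * T^3 / ε^4 with hA1def
  set A2 : ℝ := d * cB * T^2 / ε^4 with hA2def
  have hA10 : 0 ≤ A1 := by positivity
  have hA20 : 0 ≤ A2 := by positivity
  -- squeeze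
  have hbnd0 : Tendsto (fun n : ℕ => A1 * (1/(n:ℝ)) + A2 * (1/(n:ℝ))^2) atTop (nhds 0) := by
    have h1 : Tendsto (fun n : ℕ => 1/(n:ℝ)) atTop (nhds 0) :=
      tendsto_one_div_atTop_nhds_zero_nat
    have := ((h1.const_mul A1).add ((h1.pow 2).const_mul A2))
    simpa using this
  refine squeeze_zero' (Filter.Eventually.of_forall (fun n => ENNReal.toReal_nonneg)) ?_ hbnd0
  -- eventual conditions on n
  have hev1 : ∀ᶠ n : ℕ in atTop, e n / n < ε/2 :=
    he.eventually_lt_const (by positivity)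
  have hev2 : ∀ᶠ n : ℕ in atTop, (C' + K) * T ≤ (ε/2) * n := by
    have hcm : Tendsto (fun n : ℕ => (ε/2) * (n:ℝ)) atTop atTop :=
      Tendsto.const_mul_atTop (by positivity) tendsto_natCast_atTop_atTop
    exact hcm.eventually_ge_atTop _
  filter_upwards [hev1, hev2, Filter.eventually_ge_atTop 1] with n hev1n hev2n hn1
  have hn0 : (0:ℝ) < n := by exact_mod_cast hn1
  set N : ℕ := ⌊T*(n:ℝ)⌋₊ with hNdef
  have hNle : (N:ℝ) ≤ T*n := Nat.floor_le (by positivity)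
  -- the filtration
  set 𝔪 : ℕ → MeasurableSpace (Ω n) := fun ℓ =>
    MeasurableSpace.comap (fun ω' (j : Fin (ℓ+1)) => X n j ω') inferInstance with h𝔪
  have hle : ∀ ℓ, 𝔪 ℓ ≤ (inferInstance : MeasurableSpace (Ω n)) := by
    intro ℓ
    exact measurable_iff_comap_le.mp (measurable_pi_lambda _ (fun j => hmeas n j))
  have hmono : Monotone 𝔪 := by
    intro a b hab
    have hfeq : (fun ω' (j : Fin (a+1)) => X n j ω')
        = (fun (v : Fin (b+1) → (Fin d → ℤ)) (j : Fin (a+1)) => v (Fin.castLE (by omega) j))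
          ∘ (fun ω' (j : Fin (b+1)) => X n j ω') := rfl
    show MeasurableSpace.comap _ _ ≤ MeasurableSpace.comap _ _
    rw [hfeq, ← MeasurableSpace.comap_comp]
    refine MeasurableSpace.comap_mono ?_
    exact measurable_iff_comap_le.mp
      (measurable_pi_lambda _ (fun j => measurable_pi_apply _))
  have hXm : ∀ (ℓ k : ℕ), k ≤ ℓ → Measurable[𝔪 ℓ] (fun ω => X n k ω) := by
    intro ℓ k hk
    have hF : Measurable[𝔪 ℓ] (fun ω (j : Fin (ℓ+1)) => X n j ω) :=
      measurable_iff_comap_le.mpr le_rfl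
    exact (measurable_pi_apply (⟨k, by omega⟩ : Fin (ℓ+1))).comp hF
  -- per-coordinate increments
  set Dc : Fin d → ℕ → Ω n → ℝ :=
    fun i ℓ => fun ω' => ((X n (ℓ + 1) ω' i - X n ℓ ω' i : ℤ) : ℝ) with hDcdef
  have hDmeas' : ∀ i j, Measurable[𝔪 (j+1)] (Dc i j) := by
    intro i j
    have h1 : Measurable[𝔪 (j+1)] (fun ω => X n (j+1) ω i) :=
      (measurable_pi_apply i).comp (hXm (j+1) (j+1) le_rfl)
    have h2 : Measurable[𝔪 (j+1)] (fun ω => X n j ω i) :=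
      (measurable_pi_apply i).comp (hXm (j+1) j (by omega))
    exact measurable_from_top.comp (h1.sub h2)
  have hDb : ∀ i j ω, |Dc i j ω| ≤ Bb := by
    intro i j ω
    have := hbdd n j ω i
    simp only [hDcdef, hBbdef]
    exact_mod_cast this
  -- martingale part and moment bounds
  set Mc : Fin d → ℕ → Ω n → ℝ :=
    fun i k ω => ∑ j ∈ Finset.range k, (Dc i j ω - ((μ n)[Dc i j | 𝔪 j]) ω) with hMcdef
  have hmom : ∀ i (k : ℕ), ∫ ω, (Mc i k ω)^4 ∂(μ n) ≤ cB * (k:ℝ)^2 :=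
    fun i k => (DEMAux.moments (μ n) 𝔪 hle hmono (Dc i) (hDmeas' i) Bb hBb0 (hDb i) k).2
  -- a.e. bounds / measurability for the martingale part
  have hDmeas0 : ∀ i j, Measurable (Dc i j) :=
    fun i j => (hDmeas' i j).mono (hle (j+1)) le_rfl
  have hDi : ∀ i j, Integrable (Dc i j) (μ n) := fun i j =>
    DEMAux.integrable_of_bdd (μ n) (hDmeas0 i j).aestronglyMeasurable (ae_of_all _ (hDb i j))
  have hgb : ∀ i j, ∀ᵐ ω ∂(μ n), |((μ n)[Dc i j | 𝔪 j]) ω| ≤ Bb := fun i j =>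
    DEMAux.abs_condexp_le_of_abs_le (μ n) (hle j) (hDi i j) (ae_of_all _ (hDb i j))
  have hMmeas : ∀ i k, Measurable (Mc i k) := by
    intro i k
    apply Finset.measurable_sum
    intro j _
    exact (hDmeas0 i j).sub (stronglyMeasurable_condExp.mono (hle j)).measurable
  have hMb : ∀ i k, ∀ᵐ ω ∂(μ n), |Mc i k ω| ≤ 2*Bb*k := by
    intro i k
    have hall : ∀ᵐ ω ∂(μ n), ∀ j, |((μ n)[Dc i j | 𝔪 j]) ω| ≤ Bb := ae_all_iff.2 (hgb i)
    filter_upwards [hall] with ω h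
    calc |Mc i k ω| ≤ ∑ j ∈ Finset.range k, |Dc i j ω - ((μ n)[Dc i j | 𝔪 j]) ω| :=
          Finset.abs_sum_le_sum_abs _ _
      _ ≤ ∑ _j ∈ Finset.range k, (2*Bb) := by
          refine Finset.sum_le_sum fun j _ => ?_
          calc |Dc i j ω - ((μ n)[Dc i j | 𝔪 j]) ω|
              ≤ |Dc i j ω| + |((μ n)[Dc i j | 𝔪 j]) ω| := abs_sub _ _
            _ ≤ Bb + Bb := add_le_add (hDb i j ω) (h j)
            _ = 2*Bb := by ring
      _ = 2*Bb*k := by rw [Finset.sum_const, Finset.card_range]; ring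
  have hM4int : ∀ i k, Integrable (fun ω => (Mc i k ω)^4) (μ n) := by
    intro i k
    refine DEMAux.integrable_of_bdd (μ n)
      (((hMmeas i k).pow_const 4).aestronglyMeasurable) (c := (2*Bb*k)^4) ?_
    filter_upwards [hMb i k] with ω h
    calc |(Mc i k ω)^4| = |Mc i k ω|^4 := abs_pow _ _
      _ ≤ (2*Bb*k)^4 := pow_le_pow_left₀ (abs_nonneg _) h 4
  -- Chebyshev bound
  have hcheb : ∀ i, ∀ k ≤ N, ((μ n) {ω | ε*n < |Mc i k ω|}).toReal
      ≤ cB * (N:ℝ)^2 / (ε*n)^4 := by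
    intro i k hk
    refine DEMAux.cheb4 (μ n) (by positivity) (hM4int i k) ((hmom i k).trans ?_)
    have : (k:ℝ) ≤ (N:ℝ) := by exact_mod_cast hk
    have h2 : (k:ℝ)^2 ≤ (N:ℝ)^2 := pow_le_pow_left₀ (by positivity) this 2
    exact mul_le_mul_of_nonneg_left h2 hcB0
  -- good drift event
  have hgood : ∀ᵐ ω ∂(μ n), ∀ ℓ : ℕ, ℓ ≤ N → ∀ i : Fin d,
      |((μ n)[Dc i ℓ | 𝔪 ℓ]) ω - F (fun i' => (X n ℓ ω i' : ℝ) / n) ((ℓ : ℝ) / n) i|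
        ≤ C'/n := by
    rw [ae_all_iff]
    intro ℓ
    by_cases hℓ : ℓ ≤ N
    · have hℓT : (ℓ:ℝ) ≤ T * n := le_trans (by exact_mod_cast hℓ) hNle
      have hdr : ∀ᵐ ω ∂(μ n), ∀ i : Fin d,
          |((μ n)[Dc i ℓ | 𝔪 ℓ]) ω - F (fun i' => (X n ℓ ω i' : ℝ) / n) ((ℓ : ℝ) / n) i|
            ≤ C/n := ae_all_iff.2 (fun i => hdrift n hn1 ℓ hℓT i)
      filter_upwards [hdr] with ω hω
      intro _ i
      refine (hω i).trans ?_
      rw [hC'def]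
      gcongr
      exact le_abs_self C
    · filter_upwards with ω hℓ' i
      exact absurd hℓ' hℓ
  -- Grönwall / trajectory claim
  have hae : ∀ᵐ ω ∂(μ n), ω ∈ {ω | ∃ ℓ : ℕ, (ℓ : ℝ) ≤ T * n ∧
        δ * n < ‖(fun i => (X n ℓ ω i : ℝ)) - (n : ℝ) • f ((ℓ : ℝ) / n)‖} →
      ω ∈ ⋃ p ∈ (Finset.univ : Finset (Fin d)) ×ˢ Finset.range (N+1),
        {ω' | ε*n < |Mc p.1 p.2 ω'|} := by
    filter_upwards [hgood] with ω hgω hmem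
    by_contra hnot
    simp only [Set.mem_iUnion, Set.mem_setOf_eq, exists_prop, not_exists, not_and,
      not_lt] at hnot
    have hMle : ∀ i : Fin d, ∀ k ≤ N, |Mc i k ω| ≤ ε*n := by
      intro i k hk
      exact hnot (i, k) (Finset.mem_product.2 ⟨Finset.mem_univ _,
        Finset.mem_range.2 (by omega)⟩)
    obtain ⟨ℓ, hℓT, hℓgt⟩ := hmem
    have hℓN : ℓ ≤ N := Nat.le_floor hℓT
    -- basic facts
    have hne : Nonempty (Ω n) := by
      by_contra h
      have h0 : (μ n) Set.univ = 0 := by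
        have hu : (Set.univ : Set (Ω n)) = ∅ := Set.univ_eq_empty_iff.2 (not_nonempty_iff.1 h)
        rw [hu, measure_empty]
      rw [measure_univ] at h0
      exact one_ne_zero h0
    have hen0 : 0 ≤ e n := le_trans (norm_nonneg _) (hinit n hne.some)
    have henn : e n ≤ (ε/2)*n := le_of_lt ((div_lt_iff₀ hn0).1 hev1n)
    set x : ℝ := (L:ℝ)/n with hxdef
    have hx0 : 0 ≤ x := by positivity
    set A : ℝ := e n + ε*n + (C'+K)*T with hAdef
    have hA0 : 0 ≤ A := by
      have : 0 ≤ (C'+K)*T := by positivity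
      have : 0 ≤ ε*n := by positivity
      simp only [hAdef]
      linarith [hen0]
    -- telescoping identities
    have htelX : ∀ (m : ℕ) (i : Fin d), (X n m ω i : ℝ)
        = (X n 0 ω i : ℝ) + ∑ j ∈ Finset.range m, Dc i j ω := by
      intro m i
      induction m with
      | zero => simp
      | succ m ih =>
        rw [Finset.sum_range_succ]
        have hD : Dc i m ω = ((X n (m+1) ω i : ℤ) : ℝ) - ((X n m ω i : ℤ) : ℝ) := by
          simp only [hDcdef]
          push_cast
          ring
        rw [hD]
        push_cast
        push_cast at ih
        linarith [ih]
    have htelf : ∀ m : ℕ, (n:ℝ) • f ((m:ℝ)/n) = (n:ℝ) • f 0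
        + ∑ j ∈ Finset.range m, ((n:ℝ) • f (((j:ℝ)+1)/n) - (n:ℝ) • f ((j:ℝ)/n)) := by
      intro m
      induction m with
      | zero => simp
      | succ m ih =>
        rw [Finset.sum_range_succ, ← add_assoc, ← ih]
        have hc : ((m+1 : ℕ) : ℝ) = (m:ℝ)+1 := by push_cast; ring
        rw [hc]
        abel
    -- per-step deterministic (vector) bound
    have hstep : ∀ j : ℕ, j + 1 ≤ N →
        ‖(n:ℝ) • f (((j:ℝ)+1)/n) - (n:ℝ) • f ((j:ℝ)/n) - F (f ((j:ℝ)/n)) ((j:ℝ)/n)‖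
          ≤ K/n := by
      intro j hj
      have ha : 0 ≤ (j:ℝ)/n := by positivity
      have hab : (j:ℝ)/n ≤ ((j:ℝ)+1)/n := by gcongr; linarith
      have hb : ((j:ℝ)+1)/n ≤ T := by
        have h1 : ((j:ℝ)+1) ≤ (N:ℝ) := by exact_mod_cast hj
        rw [div_le_iff₀ hn0]
        linarith [hNle]
      have hsf := DEMAux.step_f hFlip hode hM₁ hM₁0 ha hab hb
      have hba : ((j:ℝ)+1)/n - (j:ℝ)/n = 1/n := by ring
      rw [hba] at hsf
      have hvec : (n:ℝ) • f (((j:ℝ)+1)/n) - (n:ℝ) • f ((j:ℝ)/n) - F (f ((j:ℝ)/n)) ((j:ℝ)/n)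
          = (n:ℝ) • (f (((j:ℝ)+1)/n) - f ((j:ℝ)/n) - (1/n : ℝ) • F (f ((j:ℝ)/n)) ((j:ℝ)/n)) := by
        rw [smul_sub, smul_sub, smul_smul]
        have : (n:ℝ) * (1/n) = 1 := by field_simp
        rw [this, one_smul]
      rw [hvec, norm_smul, Real.norm_eq_abs, abs_of_pos hn0]
      calc (n:ℝ) * ‖f (((j:ℝ)+1)/n) - f ((j:ℝ)/n) - (1/n : ℝ) • F (f ((j:ℝ)/n)) ((j:ℝ)/n)‖
          ≤ (n:ℝ) * (((L:ℝ) * ((M₁+1) * (1/n))) * (1/n)) :=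
            mul_le_mul_of_nonneg_left hsf hn0.le
        _ = K/n := by rw [hKdef]; field_simp
    -- per-step per-coordinate bound
    have hstep2 : ∀ j : ℕ, j + 1 ≤ N → ∀ i : Fin d,
        |((μ n)[Dc i j|𝔪 j]) ω - (((n:ℝ) • f (((j:ℝ)+1)/n)) i - ((n:ℝ) • f ((j:ℝ)/n)) i)|
          ≤ (C'+K)/n + x * ‖(fun i' => (X n j ω i' : ℝ)) - (n:ℝ) • f ((j:ℝ)/n)‖ := by
      intro j hj i
      have h1 : |((μ n)[Dc i j|𝔪 j]) ω - F (fun i' => (X n j ω i' : ℝ)/n) ((j:ℝ)/n) i|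
          ≤ C'/n := hgω j (by omega) i
      have h2 : |F (fun i' => (X n j ω i' : ℝ)/n) ((j:ℝ)/n) i - F (f ((j:ℝ)/n)) ((j:ℝ)/n) i|
          ≤ x * ‖(fun i' => (X n j ω i' : ℝ)) - (n:ℝ) • f ((j:ℝ)/n)‖ := by
        have hco : |F (fun i' => (X n j ω i' : ℝ)/n) ((j:ℝ)/n) i - F (f ((j:ℝ)/n)) ((j:ℝ)/n) i|
            ≤ ‖F (fun i' => (X n j ω i' : ℝ)/n) ((j:ℝ)/n) - F (f ((j:ℝ)/n)) ((j:ℝ)/n)‖ := by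
          have := norm_le_pi_norm
            (F (fun i' => (X n j ω i' : ℝ)/n) ((j:ℝ)/n) - F (f ((j:ℝ)/n)) ((j:ℝ)/n)) i
          simpa [Real.norm_eq_abs] using this
        refine hco.trans ?_
        have hdist := hFlip.dist_le_mul ((fun i' => (X n j ω i' : ℝ)/n), (j:ℝ)/n)
          (f ((j:ℝ)/n), (j:ℝ)/n)
        have heq2 : dist (Function.uncurry F ((fun i' => (X n j ω i' : ℝ)/n), (j:ℝ)/n))
            (Function.uncurry F (f ((j:ℝ)/n), (j:ℝ)/n))
            = ‖F (fun i' => (X n j ω i' : ℝ)/n) ((j:ℝ)/n) - F (f ((j:ℝ)/n)) ((j:ℝ)/n)‖ := by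
          rw [dist_eq_norm]; rfl
        rw [heq2, Prod.dist_eq] at hdist
        have hYdist : dist (fun i' => (X n j ω i' : ℝ)/n) (f ((j:ℝ)/n))
            = ‖(fun i' => (X n j ω i' : ℝ)) - (n:ℝ) • f ((j:ℝ)/n)‖ / n := by
          rw [dist_eq_norm]
          have hveq : (fun i' => (X n j ω i' : ℝ)/n) - f ((j:ℝ)/n)
              = (1/(n:ℝ)) • ((fun i' => (X n j ω i' : ℝ)) - (n:ℝ) • f ((j:ℝ)/n)) := by
            funext i'
            simp only [Pi.sub_apply, Pi.smul_apply, smul_eq_mul]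
            field_simp
          rw [hveq, norm_smul, Real.norm_eq_abs, abs_of_pos (by positivity : (0:ℝ) < 1/n)]
          ring
        rw [hYdist, dist_self, max_eq_left (by positivity :
          (0:ℝ) ≤ ‖(fun i' => (X n j ω i' : ℝ)) - (n:ℝ) • f ((j:ℝ)/n)‖ / n)] at hdist
        refine hdist.trans (le_of_eq ?_)
        rw [hxdef]
        ring
      have h3 : |F (f ((j:ℝ)/n)) ((j:ℝ)/n) i
          - (((n:ℝ) • f (((j:ℝ)+1)/n)) i - ((n:ℝ) • f ((j:ℝ)/n)) i)| ≤ K/n := by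
        have hco : |(((n:ℝ) • f (((j:ℝ)+1)/n)) i - ((n:ℝ) • f ((j:ℝ)/n)) i)
            - F (f ((j:ℝ)/n)) ((j:ℝ)/n) i|
            ≤ ‖(n:ℝ) • f (((j:ℝ)+1)/n) - (n:ℝ) • f ((j:ℝ)/n) - F (f ((j:ℝ)/n)) ((j:ℝ)/n)‖ := by
          have := norm_le_pi_norm
            ((n:ℝ) • f (((j:ℝ)+1)/n) - (n:ℝ) • f ((j:ℝ)/n) - F (f ((j:ℝ)/n)) ((j:ℝ)/n)) i
          simpa [Real.norm_eq_abs] using this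
        rw [abs_sub_comm]
        exact hco.trans (hstep j hj)
      calc |((μ n)[Dc i j|𝔪 j]) ω - (((n:ℝ) • f (((j:ℝ)+1)/n)) i - ((n:ℝ) • f ((j:ℝ)/n)) i)|
          ≤ |((μ n)[Dc i j|𝔪 j]) ω - F (fun i' => (X n j ω i' : ℝ)/n) ((j:ℝ)/n) i|
            + (|F (fun i' => (X n j ω i' : ℝ)/n) ((j:ℝ)/n) i - F (f ((j:ℝ)/n)) ((j:ℝ)/n) i|
            + |F (f ((j:ℝ)/n)) ((j:ℝ)/n) i
                - (((n:ℝ) • f (((j:ℝ)+1)/n)) i - ((n:ℝ) • f ((j:ℝ)/n)) i)|) := by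
            exact (abs_sub_le _ _ _).trans (add_le_add (le_refl _) (abs_sub_le _ _ _))
        _ ≤ C'/n + (x * ‖(fun i' => (X n j ω i' : ℝ)) - (n:ℝ) • f ((j:ℝ)/n)‖ + K/n) :=
            add_le_add h1 (add_le_add h2 h3)
        _ = (C'+K)/n + x * ‖(fun i' => (X n j ω i' : ℝ)) - (n:ℝ) • f ((j:ℝ)/n)‖ := by ring
    -- Gronwall induction
    have hgron : ∀ m : ℕ, m ≤ N →
        ‖(fun i => (X n m ω i : ℝ)) - (n:ℝ) • f ((m:ℝ)/n)‖ ≤ A * (1+x)^m := by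
      intro m
      induction m using Nat.strong_induction_on with
      | _ m ih =>
      intro hmN
      refine (pi_norm_le_iff_of_nonneg (mul_nonneg hA0 (by positivity))).2 (fun i => ?_)
      have hdecomp : ((fun i => (X n m ω i : ℝ)) - (n:ℝ) • f ((m:ℝ)/n)) i
          = ((X n 0 ω i : ℝ) - ((n:ℝ) • f 0) i)
            + (Mc i m ω
              + ∑ j ∈ Finset.range m, (((μ n)[Dc i j|𝔪 j]) ω
                  - (((n:ℝ) • f (((j:ℝ)+1)/n)) i - ((n:ℝ) • f ((j:ℝ)/n)) i))) := by
        have h1 := htelX m i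
        have h2 := congrFun (htelf m) i
        simp only [Pi.add_apply, Finset.sum_apply, Pi.sub_apply] at h2
        simp only [Pi.sub_apply, hMcdef]
        rw [h1, h2]
        simp only [Finset.sum_sub_distrib]
        ring
      rw [hdecomp]
      have hinit_i : |(X n 0 ω i : ℝ) - ((n:ℝ) • f 0) i| ≤ e n := by
        have h0 := norm_le_pi_norm ((fun i => (X n 0 ω i : ℝ)) - (n:ℝ) • f 0) i
        simp only [Pi.sub_apply, Real.norm_eq_abs] at h0
        exact h0.trans (hinit n ω)
      have hM_i : |Mc i m ω| ≤ ε*n := hMle i m hmN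
      have hsum_i : |∑ j ∈ Finset.range m, (((μ n)[Dc i j|𝔪 j]) ω
            - (((n:ℝ) • f (((j:ℝ)+1)/n)) i - ((n:ℝ) • f ((j:ℝ)/n)) i))|
          ≤ (C'+K)*T + A*((1+x)^m - 1) := by
        calc |∑ j ∈ Finset.range m, (((μ n)[Dc i j|𝔪 j]) ω
              - (((n:ℝ) • f (((j:ℝ)+1)/n)) i - ((n:ℝ) • f ((j:ℝ)/n)) i))|
            ≤ ∑ j ∈ Finset.range m, |((μ n)[Dc i j|𝔪 j]) ω
              - (((n:ℝ) • f (((j:ℝ)+1)/n)) i - ((n:ℝ) • f ((j:ℝ)/n)) i)| :=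
              Finset.abs_sum_le_sum_abs _ _
          _ ≤ ∑ j ∈ Finset.range m, ((C'+K)/n + x*(A*(1+x)^j)) := by
              refine Finset.sum_le_sum (fun j hj => ?_)
              rw [Finset.mem_range] at hj
              have hj1 : j + 1 ≤ N := by omega
              refine (hstep2 j hj1 i).trans ?_
              have herrj := ih j hj (by omega)
              have := mul_le_mul_of_nonneg_left herrj hx0
              linarith
          _ = (m:ℝ)*((C'+K)/n) + A * ∑ j ∈ Finset.range m, (x*(1+x)^j) := by
              rw [Finset.sum_add_distrib, Finset.sum_const, Finset.card_range,
                Finset.mul_sum, nsmul_eq_mul]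
              congr 1
              refine Finset.sum_congr rfl (fun j _ => ?_)
              ring
          _ = (m:ℝ)*((C'+K)/n) + A*((1+x)^m - 1) := by
              rw [DEMAux.geom_sum_aux]
          _ ≤ (C'+K)*T + A*((1+x)^m - 1) := by
              have hmT : (m:ℝ) ≤ T*n := le_trans (by exact_mod_cast hmN) hNle
              have : (m:ℝ)*((C'+K)/n) ≤ (T*n)*((C'+K)/n) :=
                mul_le_mul_of_nonneg_right hmT (by positivity)
              have heq3 : (T*(n:ℝ))*((C'+K)/n) = (C'+K)*T := by field_simp
              linarith
      calc ‖((X n 0 ω i : ℝ) - ((n:ℝ) • f 0) i)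
            + (Mc i m ω
              + ∑ j ∈ Finset.range m, (((μ n)[Dc i j|𝔪 j]) ω
                  - (((n:ℝ) • f (((j:ℝ)+1)/n)) i - ((n:ℝ) • f ((j:ℝ)/n)) i)))‖
          ≤ |(X n 0 ω i : ℝ) - ((n:ℝ) • f 0) i|
            + (|Mc i m ω|
              + |∑ j ∈ Finset.range m, (((μ n)[Dc i j|𝔪 j]) ω
                  - (((n:ℝ) • f (((j:ℝ)+1)/n)) i - ((n:ℝ) • f ((j:ℝ)/n)) i))|) := by
            rw [Real.norm_eq_abs]
            exact (abs_add_le _ _).trans (add_le_add (le_refl _) (abs_add_le _ _))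
        _ ≤ e n + (ε*n + ((C'+K)*T + A*((1+x)^m - 1))) :=
            add_le_add hinit_i (add_le_add hM_i hsum_i)
        _ = A * (1+x)^m := by rw [hAdef]; ring
    -- conclude contradiction
    have h1 : ‖(fun i => (X n ℓ ω i : ℝ)) - (n:ℝ) • f ((ℓ:ℝ)/n)‖ ≤ A * (1+x)^ℓ :=
      hgron ℓ hℓN
    have hpow : (1+x)^ℓ ≤ E := by
      have hxe : 1+x ≤ Real.exp x := by linarith [Real.add_one_le_exp x]
      calc (1+x)^ℓ ≤ (Real.exp x)^ℓ := pow_le_pow_left₀ (by positivity) hxe ℓ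
        _ = Real.exp (ℓ * x) := by rw [← Real.exp_nat_mul]
        _ ≤ Real.exp ((L:ℝ)*T) := by
            refine Real.exp_le_exp.2 ?_
            have hℓT' : (ℓ:ℝ) ≤ T*n := hℓT
            rw [hxdef]
            calc (ℓ:ℝ) * ((L:ℝ)/n) ≤ (T*n) * ((L:ℝ)/n) :=
                mul_le_mul_of_nonneg_right hℓT' (by positivity)
              _ = (L:ℝ)*T := by field_simp
        _ = E := by rw [hEdef]
    have h2 : A * (1+x)^ℓ ≤ A * E := mul_le_mul_of_nonneg_left hpow hA0
    have h3 : A * E ≤ δ * n := by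
      have hA2 : A ≤ 2*(ε*n) := by
        have : (C'+K)*T ≤ (ε/2)*n := hev2n
        simp only [hAdef]
        linarith
      have : A * E ≤ (2*(ε*n)) * E := mul_le_mul_of_nonneg_right hA2 hE0.le
      refine this.trans (le_of_eq ?_)
      rw [hεdef]
      field_simp
    exact absurd hℓgt (not_lt.2 (h1.trans (h2.trans h3)))
  -- measure chain
  calc ((μ n) {ω | ∃ ℓ : ℕ, (ℓ : ℝ) ≤ T * n ∧
        δ * n < ‖(fun i => (X n ℓ ω i : ℝ)) - (n : ℝ) • f ((ℓ : ℝ) / n)‖}).toReal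
      ≤ ((μ n) (⋃ p ∈ (Finset.univ : Finset (Fin d)) ×ˢ Finset.range (N+1),
          {ω' | ε*n < |Mc p.1 p.2 ω'|})).toReal :=
        ENNReal.toReal_mono (measure_ne_top _ _)
          (measure_mono_ae (hae.mono fun ω h => h))
    _ ≤ (∑ p ∈ (Finset.univ : Finset (Fin d)) ×ˢ Finset.range (N+1),
          (μ n) {ω' | ε*n < |Mc p.1 p.2 ω'|}).toReal := by
        refine ENNReal.toReal_mono ?_ (measure_biUnion_finset_le _ _)
        exact (ENNReal.sum_lt_top.2 (fun p _ => measure_lt_top _ _)).ne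
    _ = ∑ p ∈ (Finset.univ : Finset (Fin d)) ×ˢ Finset.range (N+1),
          ((μ n) {ω' | ε*n < |Mc p.1 p.2 ω'|}).toReal :=
        ENNReal.toReal_sum (fun p _ => measure_ne_top _ _)
    _ ≤ ∑ _p ∈ (Finset.univ : Finset (Fin d)) ×ˢ Finset.range (N+1),
          (cB * (N:ℝ)^2 / (ε*n)^4) := by
        refine Finset.sum_le_sum (fun p hp => ?_)
        refine hcheb p.1 p.2 ?_
        have := (Finset.mem_product.1 hp).2
        rw [Finset.mem_range] at this
        omega
    _ = (d * ((N:ℝ)+1)) * (cB * (N:ℝ)^2 / (ε*n)^4) := by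
        rw [Finset.sum_const, Finset.card_product, Finset.card_univ, Fintype.card_fin,
          Finset.card_range, nsmul_eq_mul]
        push_cast
        ring
    _ ≤ (d * (T*(n:ℝ)+1)) * (cB * (T*(n:ℝ))^2 / (ε*n)^4) := by
        have hN1 : (N:ℝ)+1 ≤ T*n+1 := by linarith
        gcongr
    _ = A1 * (1/(n:ℝ)) + A2 * (1/(n:ℝ))^2 := by
        rw [hA1def, hA2def]
        field_simp
end

section
/- Let P_B(n, ε) be a family of functions [0,1] → [0,1], nonincreasing in ε being lowered (i.e., nondecreasing in ε), and suppose there is ν > 0 and a continuous strictly decreasing surjection f : ℝ → (0,1) such that P_B(n, ε_n) → f(z) whenever n^{1/ν}(ε* − ε_n) → z ∈ ℝ. Then for every p ∈ (0,1) the finite-length threshold ε_p(n) := sup{ε : P_B(n, ε) ≤ p} satisfies n^{1/ν}(ε* − ε_p(n)) → f^{−1}(p) as n → ∞. -/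
/-!
Compare the threshold with the points `ε* - c n^{-1/ν}`. For `c < f⁻¹(p)` the scaling law
gives `P_B` at that point a limit `f c > p`, so by monotonicity the threshold eventually lies
below it; for `c > f⁻¹(p)` the limit is `< p`, so the point itself eventually lies below the
threshold. Since `c` is arbitrary on each side, `n^{1/ν}(ε* - ε_p(n))` is squeezed to `f⁻¹(p)`.
-/

open Filter Set Topology

noncomputable def finiteLengthThreshold (g : ℝ → ℝ) (p : ℝ) : ℝ :=
  sSup {ε | ε ∈ Icc (0:ℝ) 1 ∧ g ε ≤ p}

theorem finiteLengthThreshold_le {g : ℝ → ℝ} {p e : ℝ} (hg : MonotoneOn g (Icc 0 1))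
    (he : e ∈ Icc (0:ℝ) 1) (hpe : p < g e) : finiteLengthThreshold g p ≤ e :=
  Real.sSup_le (fun _ hx => not_lt.1 fun hex => (hpe.trans_le (hg he hx.1 hex.le)).not_ge hx.2)
    he.1

theorem le_finiteLengthThreshold {g : ℝ → ℝ} {p e : ℝ} (he : e ∈ Icc (0:ℝ) 1) (hep : g e ≤ p) :
    e ≤ finiteLengthThreshold g p :=
  le_csSup ⟨1, fun _ hx => hx.1.2⟩ ⟨he, hep⟩

theorem mul_sub_sub_div_cancel (a c : ℝ) {r : ℝ} (hr : r ≠ 0) : r * (a - (a - c / r)) = c := by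
  rw [sub_sub_self, mul_div_cancel₀ c hr]

theorem tendsto_mul_sub_of_eventually_bounds {α : Type*} {l : Filter α} {r t : α → ℝ}
    (hr : Tendsto r l atTop) {a z : ℝ}
    (hlow : ∀ c < z, ∀ᶠ x in l, t x ≤ a - c / r x)
    (hup : ∀ c > z, ∀ᶠ x in l, a - c / r x ≤ t x) :
    Tendsto (fun x => r x * (a - t x)) l (𝓝 z) := by
  rw [tendsto_order]
  constructor
  · intro b hb
    obtain ⟨c, hbc, hcz⟩ := exists_between hb
    filter_upwards [hlow c hcz, hr.eventually_gt_atTop 0] with x ht hrx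
    calc b < c := hbc
      _ = r x * (a - (a - c / r x)) := (mul_sub_sub_div_cancel a c hrx.ne').symm
      _ ≤ r x * (a - t x) := by gcongr
  · intro b hb
    obtain ⟨c, hzc, hcb⟩ := exists_between hb
    filter_upwards [hup c hzc, hr.eventually_gt_atTop 0] with x ht hrx
    calc r x * (a - t x) ≤ r x * (a - (a - c / r x)) := by gcongr
      _ = c := mul_sub_sub_div_cancel a c hrx.ne'
      _ < b := hcb

theorem finite_length_threshold_scaling_general
    (PB : ℕ → ℝ → ℝ) (ν εstar : ℝ) (f : ℝ → ℝ)
    (hν : 0 < ν) (hεstar : εstar ∈ Set.Ioo (0:ℝ) 1)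
    (hmono : ∀ n, MonotoneOn (PB n) (Set.Icc (0:ℝ) 1))
    (hf_anti : StrictAnti f)
    (hscaling : ∀ z : ℝ, ∀ εseq : ℕ → ℝ,
      Tendsto (fun n : ℕ => (n : ℝ) ^ (1/ν) * (εstar - εseq n)) atTop (nhds z) →
      Tendsto (fun n : ℕ => PB n (εseq n)) atTop (nhds (f z)))
    (p : ℝ) (z : ℝ) (hz : f z = p) :
    Tendsto (fun n : ℕ => (n : ℝ) ^ (1/ν) *
        (εstar - sSup {ε | ε ∈ Set.Icc (0:ℝ) 1 ∧ PB n ε ≤ p})) atTop (nhds z) := by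
  set r : ℕ → ℝ := fun n => (n : ℝ) ^ (1/ν)
  have hr : Tendsto r atTop atTop :=
    (tendsto_rpow_atTop (one_div_pos.2 hν)).comp tendsto_natCast_atTop_atTop
  have hPB : ∀ c, Tendsto (fun n => PB n (εstar - c / r n)) atTop (𝓝 (f c)) := fun c =>
    hscaling c _ <| tendsto_const_nhds.congr' <| (hr.eventually_gt_atTop 0).mono fun n hn =>
      (mul_sub_sub_div_cancel εstar c hn.ne').symm
  have hmem : ∀ c, ∀ᶠ n in atTop, εstar - c / r n ∈ Icc (0:ℝ) 1 := fun c => by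
    have hε : Tendsto (fun n => εstar - c / r n) atTop (𝓝 εstar) := by
      simpa using tendsto_const_nhds.sub (tendsto_const_nhds.div_atTop hr)
    exact hε.eventually (Icc_mem_nhds hεstar.1 hεstar.2)
  refine tendsto_mul_sub_of_eventually_bounds (t := fun n => finiteLengthThreshold (PB n) p) hr
    (fun c hc => ?_) (fun c hc => ?_)
  · filter_upwards [hmem c, (hPB c).eventually_const_lt (hz ▸ hf_anti hc)] with n he hpe
    exact finiteLengthThreshold_le (hmono n) he hpe
  · filter_upwards [hmem c, (hPB c).eventually_lt_const (hz ▸ hf_anti hc)] with n he hep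
    exact le_finiteLengthThreshold he hep.le

/-- if `P_B(n,·)` maps `[0,1]` to `[0,1]`, is nondecreasing in `ε`, and obeys the
scaling law `P_B(n, ε_n) → f(z)` whenever `n^{1/ν}(ε* − ε_n) → z`, with `f : ℝ → (0,1)` a
continuous strictly decreasing surjection onto `(0,1)`, then for every `p ∈ (0,1)` the
finite-length threshold `ε_p(n) = sup{ε ∈ [0,1] : P_B(n,ε) ≤ p}` satisfies
`n^{1/ν}(ε* − ε_p(n)) → f⁻¹(p)`. -/
theorem finite_length_threshold_scaling
    (PB : ℕ → ℝ → ℝ) (ν εstar : ℝ) (f : ℝ → ℝ)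
    (hν : 0 < ν) (hεstar : εstar ∈ Set.Ioo (0:ℝ) 1)
    (hrange : ∀ n, ∀ ε ∈ Set.Icc (0:ℝ) 1, PB n ε ∈ Set.Icc (0:ℝ) 1)
    (hmono : ∀ n, MonotoneOn (PB n) (Set.Icc (0:ℝ) 1))
    (hf_cont : Continuous f) (hf_anti : StrictAnti f)
    (hf_into : ∀ z, f z ∈ Set.Ioo (0:ℝ) 1)
    (hf_onto : ∀ y ∈ Set.Ioo (0:ℝ) 1, ∃ z, f z = y)
    (hscaling : ∀ z : ℝ, ∀ εseq : ℕ → ℝ,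
      Tendsto (fun n : ℕ => (n : ℝ) ^ (1/ν) * (εstar - εseq n)) atTop (nhds z) →
      Tendsto (fun n : ℕ => PB n (εseq n)) atTop (nhds (f z)))
    (p : ℝ) (hp : p ∈ Set.Ioo (0:ℝ) 1) (z : ℝ) (hz : f z = p) :
    Tendsto (fun n : ℕ => (n : ℝ) ^ (1/ν) *
        (εstar - sSup {ε | ε ∈ Set.Icc (0:ℝ) 1 ∧ PB n ε ≤ p})) atTop (nhds z) :=
  finite_length_threshold_scaling_general PB ν εstar f hν hεstar hmono hf_anti hscaling p z hz
end

section
/- For the (3,6)-regular LDPC ensemble, the density evolution threshold ε* is the supremum of ε ∈ (0,1) such that x = ε(1 − (1−x)⁵)² has no solution x ∈ (0,1]; equivalently ε* = min_{x ∈ (0,1]} x/(1 − (1−x)⁵)², and ε* ∈ (0.4294, 0.4295). -/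
open Set

lemma ldpc_D_pos {x : ℝ} (h1 : 0 < x) (h2 : x ≤ 1) : 0 < (1 - (1 - x) ^ 5) ^ 2 := by
  have hy : (0:ℝ) ≤ 1 - x := by linarith
  have h : 0 < 1 - (1 - x)^5 := by
    have heq : 1 - (1-x)^5 = x*(1+(1-x)+(1-x)^2+(1-x)^3+(1-x)^4) := by ring
    rw [heq]
    have h2' := pow_nonneg hy 2
    have h3' := pow_nonneg hy 3
    have h4' := pow_nonneg hy 4
    nlinarith
  positivity

lemma ldpc_key {x : ℝ} (h1 : 0 < x) (h2 : x ≤ 1) :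
    (0.4294 : ℝ) * (1 - (1 - x) ^ 5) ^ 2 < x := by
  have h9 : 4294 * (x * (x^4 - 5*x^3 + 10*x^2 - 10*x + 5)^2) < 10000 := by
    nlinarith [sq_nonneg (x - 2605/10000), sq_nonneg (x*(x - 2605/10000)),
      sq_nonneg (x^2*(x-2605/10000)), sq_nonneg ((1-x)*(x-2605/10000)),
      sq_nonneg (x^2-x), sq_nonneg x, mul_pos h1 h1,
      sq_nonneg (x^3*(x-2605/10000)), sq_nonneg (x^4*(x-2605/10000))]
  have heq : (1 - (1 - x) ^ 5) ^ 2 = x * (x * (x^4 - 5*x^3 + 10*x^2 - 10*x + 5)^2) := by ring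
  rw [heq]
  have := mul_lt_mul_of_pos_left h9 h1
  norm_num at this ⊢
  nlinarith [this]

lemma ldpc_small {x : ℝ} (h1 : 0 < x) (h2 : x ≤ 1) :
    (1 - (1 - x) ^ 5) ^ 2 ≤ 25 * x ^ 2 := by
  have hy : (0:ℝ) ≤ 1 - x := by linarith
  have hs5 : 0 ≤ 5 - (x^4 - 5*x^3 + 10*x^2 - 10*x + 5) := by
    nlinarith [pow_nonneg hy 2, sq_nonneg x, mul_nonneg (sq_nonneg x) hy]
  have hs0 : 0 ≤ 5 + (x^4 - 5*x^3 + 10*x^2 - 10*x + 5) := by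
    nlinarith [pow_nonneg hy 2, pow_nonneg hy 3, pow_nonneg hy 4]
  nlinarith [mul_nonneg (mul_nonneg (sq_nonneg x) hs5) hs0]

noncomputable def ldpcG : ℝ → ℝ := fun x => x / (1 - (1 - x) ^ 5) ^ 2

lemma ldpcG_contOn : ContinuousOn ldpcG (Icc (1/100 : ℝ) 1) := by
  apply ContinuousOn.div (by fun_prop) (by fun_prop)
  intro x hx
  exact ne_of_gt (ldpc_D_pos (by linarith [hx.1]) hx.2)

/-- for the `(3,6)`-regular LDPC ensemble, the density evolution threshold `ε*`
is the supremum of the set of `ε ∈ (0,1)` for which `x = ε(1 − (1−x)⁵)²` has no solution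
`x ∈ (0,1]`; equivalently `ε*` is the minimum over `x ∈ (0,1]` of `x/(1 − (1−x)⁵)²`
(the minimum being attained), and `ε* ∈ (0.4294, 0.4295)`. -/
theorem density_evolution_threshold_36 :
    ∃ εstar : ℝ,
      IsLUB {ε : ℝ | ε ∈ Set.Ioo (0:ℝ) 1 ∧
          ¬ ∃ x ∈ Set.Ioc (0:ℝ) 1, x = ε * (1 - (1 - x) ^ 5) ^ 2} εstar ∧
      (∃ x0 ∈ Set.Ioc (0:ℝ) 1,
          εstar = x0 / (1 - (1 - x0) ^ 5) ^ 2 ∧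
          ∀ x ∈ Set.Ioc (0:ℝ) 1, εstar ≤ x / (1 - (1 - x) ^ 5) ^ 2) ∧
      εstar ∈ Set.Ioo (0.4294 : ℝ) (0.4295 : ℝ) := by
  obtain ⟨x0, hx0mem, hx0min'⟩ :=
    isCompact_Icc.exists_isMinOn (nonempty_Icc.mpr (by norm_num : (1/100:ℝ) ≤ 1)) ldpcG_contOn
  have hx0min : ∀ y ∈ Icc (1/100:ℝ) 1, ldpcG x0 ≤ ldpcG y := fun y hy => hx0min' hy
  have hx0pos : (0:ℝ) < x0 := by linarith [hx0mem.1]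
  have hx0le : x0 ≤ 1 := hx0mem.2
  have hD0 := ldpc_D_pos hx0pos hx0le
  -- min over all of (0,1]
  have hmin : ∀ x ∈ Ioc (0:ℝ) 1, ldpcG x0 ≤ ldpcG x := by
    rintro x ⟨hxp, hx1⟩
    rcases le_or_gt (1/100 : ℝ) x with h | h
    · exact hx0min x ⟨h, hx1⟩
    · have hD := ldpc_D_pos hxp hx1
      have hge : (4:ℝ) ≤ ldpcG x := by
        rw [ldpcG, le_div_iff₀ hD]
        have := ldpc_small hxp hx1
        nlinarith
      have h1le : ldpcG x0 ≤ ldpcG 1 := hx0min 1 ⟨by norm_num, le_refl 1⟩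
      have hG1 : ldpcG 1 = 1 := by norm_num [ldpcG]
      linarith
  have hub : ldpcG x0 < 0.4295 := by
    have h1 : ldpcG x0 ≤ ldpcG (13/50) := hx0min (13/50) ⟨by norm_num, by norm_num⟩
    have h2 : ldpcG (13/50) < 0.4295 := by norm_num [ldpcG]
    linarith
  have hlb : (0.4294:ℝ) < ldpcG x0 := by
    rw [ldpcG, lt_div_iff₀ hD0]
    exact ldpc_key hx0pos hx0le
  -- membership lemma
  have hS : ∀ ε : ℝ, 0 < ε → ε < ldpcG x0 →
      ε ∈ {ε : ℝ | ε ∈ Set.Ioo (0:ℝ) 1 ∧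
          ¬ ∃ x ∈ Set.Ioc (0:ℝ) 1, x = ε * (1 - (1 - x) ^ 5) ^ 2} := by
    intro ε hε0 hεlt
    refine ⟨⟨hε0, by linarith⟩, ?_⟩
    rintro ⟨x, hx, heq⟩
    have hD := ldpc_D_pos hx.1 hx.2
    have hg : ldpcG x = ε := by
      rw [ldpcG, div_eq_iff (ne_of_gt hD)]
      exact heq
    have := hmin x hx
    rw [hg] at this
    linarith
  refine ⟨ldpcG x0, ⟨?_, ?_⟩, ⟨x0, ⟨hx0pos, hx0le⟩, rfl, hmin⟩, hlb, hub⟩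
  · -- upper bound
    rintro ε ⟨⟨hε0, hε1⟩, hno⟩
    by_contra hgt
    push_neg at hgt
    apply hno
    set φ : ℝ → ℝ := fun x => ε * (1 - (1 - x) ^ 5) ^ 2 - x with hφ
    have hφc : ContinuousOn φ (Icc (1/100 : ℝ) x0) := by fun_prop
    have h1x0 : (1/100:ℝ) ≤ x0 := hx0mem.1
    have hφa : φ (1/100) < 0 := by
      have hc : (1 - (1-(1/100:ℝ))^5)^2 < 1/100 := by norm_num
      have hc0 : (0:ℝ) ≤ (1 - (1-(1/100:ℝ))^5)^2 := sq_nonneg _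
      simp only [hφ]
      nlinarith
    have hφb : 0 < φ x0 := by
      have hx0lt : x0 < ε * (1 - (1 - x0) ^ 5) ^ 2 := by
        rw [ldpcG, div_lt_iff₀ hD0] at hgt
        linarith
      simp only [hφ]
      linarith
    obtain ⟨x, hx, hφx⟩ := intermediate_value_Icc h1x0 hφc ⟨hφa.le, hφb.le⟩
    refine ⟨x, ⟨by linarith [hx.1], le_trans hx.2 hx0le⟩, ?_⟩
    simp only [hφ] at hφx
    linarith
  · -- least upper bound
    intro b hb
    by_contra hlt
    push_neg at hlt
    have h14 : (1/4:ℝ) ≤ b := hb (hS (1/4) (by norm_num) (by linarith))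
    have : (b + ldpcG x0)/2 ≤ b :=
      hb (hS ((b + ldpcG x0)/2) (by linarith) (by linarith))
    linarith
end
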